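/- arXiv:2411.19255 — 2 statements merged into one kernel-verified Lean document; each statement's English description precedes it below -/
import Mathlib

section
/- Let λ, μ, α > 0 and let φ satisfy φ(T)/T → ∞ as T → ∞. Then for every x > 0, limsup_{T→∞} (1/(φ(T)·ln(φ(T)/T))) ln P(ξ_T(1) ≥ x) ≤ −x. -/
open MeasureTheory ProbabilityTheory Filter Set
open scoped ENNReal Topology

noncomputable section

/-- Transition probabilities of the embedded Markov chain of the Poisson process with
uniform catastrophes: from `i ≥ 1`, go to `i+1` with probability `λ/(λ+μ)` and to each
`j < i` with probability `μ/(i(λ+μ))`; from `0`, go to `1` with probability `1`. -/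
def transP (lam mu : ℝ) (i j : ℕ) : ℝ :=
  if i = 0 then (if j = 1 then 1 else 0)
  else if j = i + 1 then lam / (lam + mu)
  else if j < i then mu / (i * (lam + mu))
  else 0

/-- `η` is (distributed as) the discrete-time Markov chain on `ℕ` started at `x` with
transition probabilities `transP lam mu`, under the probability measure `P`:
the finite-dimensional distributions are products of transition probabilities. -/
def IsMarkovChainFrom {Ω : Type*} [MeasurableSpace Ω] (P : Measure Ω)
    (lam mu : ℝ) (x : ℕ) (η : ℕ → Ω → ℕ) : Prop :=
  (∀ k, Measurable (η k)) ∧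
  ∀ (n : ℕ) (path : ℕ → ℕ),
    P {ω | ∀ l ≤ n, η l ω = path l} =
      (if path 0 = x then 1 else 0) *
        ∏ l ∈ Finset.range n, ENNReal.ofReal (transP lam mu (path l) (path (l + 1)))

/-- `ν` is a Poisson process of rate `α` under `P`: it starts at `0`, has monotone paths
on `[0,∞)`, independent increments, and each increment over `[s,t]` is Poisson
distributed with mean `α(t-s)`. -/
def IsPoissonProcess {Ω : Type*} [MeasurableSpace Ω] (P : Measure Ω)
    (α : ℝ) (ν : ℝ → Ω → ℕ) : Prop :=
  (∀ t, Measurable (ν t)) ∧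
  (∀ ω, ν 0 ω = 0) ∧
  (∀ ω, MonotoneOn (fun t => ν t ω) (Set.Ici (0 : ℝ))) ∧
  (∀ (n : ℕ) (t : ℕ → ℝ), 0 ≤ t 0 → Monotone t →
    iIndepFun
      (fun i : Fin n => fun ω => ν (t (i + 1)) ω - ν (t i) ω) P) ∧
  (∀ s t : ℝ, 0 ≤ s → s ≤ t → ∀ k : ℕ,
    P {ω | ν t ω - ν s ω = k} =
      ENNReal.ofReal (Real.exp (-(α * (t - s))) * (α * (t - s)) ^ k / (Nat.factorial k)))

/-- The processes `η` and `ν` are independent (as processes). -/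
def IndepProc {Ω : Type*} [MeasurableSpace Ω] (P : Measure Ω)
    (η : ℕ → Ω → ℕ) (ν : ℝ → Ω → ℕ) : Prop :=
  IndepFun (fun ω => fun k => η k ω) (fun ω => fun t => ν t ω) P

/-!
The chain moves up by at most one per step, so `η k ≤ k` almost surely and `ξ(T) ≤ ν(T)`.
Hence `P(ξ(T) ≥ xφ(T)) ≤ P(ν(T) ≥ n) ≤ (αT)ⁿ/n!` with `n = ⌈xφ(T)⌉`, and `n! ≥ (n/e)ⁿ`
turns this into
`log P ≤ -xφ(T) (log (xφ(T)/(αT)) - 1) = -xφ(T) log (φ(T)/T) (1 + o(1))`.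
-/

section

open scoped Nat

theorem Real.pow_add_div_factorial_le {c : ℝ} (hc : 0 ≤ c) (n k : ℕ) :
    c ^ (n + k) / (n + k)! ≤ c ^ n / n ! * (c ^ k / k !) := by
  have hfac : (n ! * k ! : ℝ) ≤ (n + k)! := by
    exact_mod_cast Nat.le_of_dvd (n + k).factorial_pos
      (Nat.factorial_mul_factorial_dvd_factorial_add n k)
  rw [pow_add, div_mul_div_comm (c ^ n)]
  exact div_le_div_of_nonneg_left (by positivity) (by positivity) hfac

theorem Real.tsum_pow_add_div_factorial_le {c : ℝ} (hc : 0 ≤ c) (n : ℕ) :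
    ∑' k, c ^ (n + k) / (n + k)! ≤ c ^ n / n ! * Real.exp c := by
  have hexp : HasSum (fun k => c ^ n / n ! * (c ^ k / k !)) (c ^ n / n ! * Real.exp c) := by
    rw [Real.exp_eq_exp_ℝ]
    exact (NormedSpace.expSeries_div_hasSum_exp c).mul_left _
  exact Real.tsum_le_of_sum_le (fun k => by positivity) fun s =>
    (Finset.sum_le_sum fun k _ => Real.pow_add_div_factorial_le hc n k).trans
      (sum_le_hasSum s (fun k _ => by positivity) hexp)

theorem Real.log_pow_div_factorial_le {c y : ℝ} {n : ℕ} (hc : 0 < c) (hy : 0 < y)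
    (hyn : y ≤ n) (hyc : 1 ≤ Real.log (y / c)) :
    Real.log (c ^ n / n !) ≤ -(y * (Real.log (y / c) - 1)) := by
  have hn : (0 : ℝ) < n := hy.trans_le hyn
  have hstirling : (n : ℝ) * Real.log n - n ≤ Real.log n ! := by
    have h := Real.pow_div_factorial_le_exp (n : ℝ) hn.le n
    rw [div_le_iff₀ (by positivity)] at h
    have h := Real.log_le_log (by positivity) h
    rw [Real.log_pow, Real.log_mul (Real.exp_ne_zero _) (by positivity), Real.log_exp] at h
    linarith
  have hmono : Real.log (y / c) ≤ Real.log (n / c) := by gcongr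
  calc Real.log (c ^ n / n !) ≤ -(n * (Real.log (n / c) - 1)) := by
        rw [Real.log_div (by positivity) (by positivity), Real.log_pow,
          Real.log_div hn.ne' hc.ne']
        linarith
    _ ≤ -(y * (Real.log (y / c) - 1)) := by
        nlinarith [mul_le_mul hyn (sub_le_sub_right hmono 1) (by linarith) hn.le]

theorem transP_eq_zero_of_succ_lt {lam mu : ℝ} {i j : ℕ} (h : i + 1 < j) :
    transP lam mu i j = 0 := by
  unfold transP
  split_ifs <;> first | rfl | (exfalso; omega)

theorem le_add_of_path_weight_ne_zero {lam mu : ℝ} {x : ℕ} {p : ℕ → ℕ} :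
    ∀ n, (if p 0 = x then (1 : ℝ≥0∞) else 0) *
      ∏ l ∈ Finset.range n, ENNReal.ofReal (transP lam mu (p l) (p (l + 1))) ≠ 0 →
      p n ≤ x + n
  | 0, h => by
    by_contra hne
    simp_all
  | n + 1, h => by
    rw [Finset.prod_range_succ, ← mul_assoc] at h
    obtain ⟨hprefix, hstep⟩ := mul_ne_zero_iff.1 h
    have := le_add_of_path_weight_ne_zero n hprefix
    by_contra! hjump
    exact hstep (by rw [transP_eq_zero_of_succ_lt (by omega), ENNReal.ofReal_zero])

namespace IsMarkovChainFrom

variable {Ω : Type*} [MeasurableSpace Ω] {P : Measure Ω} {lam mu : ℝ} {x : ℕ}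
  {η : ℕ → Ω → ℕ}

theorem ae_le_add (hη : IsMarkovChainFrom P lam mu x η) : ∀ᵐ ω ∂P, ∀ n, η n ω ≤ x + n := by
  refine ae_all_iff.2 fun n => ?_
  -- a cylinder event only sees the first `n + 1` values of the path, so countably many suffice
  let extend (v : Fin (n + 1) → ℕ) (l : ℕ) : ℕ := if h : l < n + 1 then v ⟨l, h⟩ else 0
  have hcover : {ω | ¬η n ω ≤ x + n} ⊆
      ⋃ (v : Fin (n + 1) → ℕ) (_ : x + n < v (Fin.last n)),
        {ω | ∀ l ≤ n, η l ω = extend v l} := by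
    intro ω hω
    simp only [mem_ofPred_eq, not_le] at hω
    simp only [mem_iUnion, mem_ofPred_eq]
    exact ⟨fun i => η i ω, hω,
      fun l hl => by simp only [extend, dif_pos (Nat.lt_succ_of_le hl)]⟩
  refine measure_mono_null hcover (measure_iUnion_null fun v => measure_iUnion_null fun hv => ?_)
  rw [hη.2]
  by_contra hne
  have := le_add_of_path_weight_ne_zero n hne
  simp only [extend, dif_pos (Nat.lt_succ_self n)] at this
  exact absurd hv (not_lt.2 this)

end IsMarkovChainFrom

namespace IsPoissonProcess

variable {Ω : Type*} [MeasurableSpace Ω] {P : Measure Ω} {α : ℝ} {ν : ℝ → Ω → ℕ}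

theorem measure_eq (hν : IsPoissonProcess P α ν) {T : ℝ} (hT : 0 ≤ T) (k : ℕ) :
    P {ω | ν T ω = k} = ENNReal.ofReal (Real.exp (-(α * T)) * (α * T) ^ k / k !) := by
  simpa [hν.2.1] using hν.2.2.2.2 0 T le_rfl hT k

theorem measure_le_le (hν : IsPoissonProcess P α ν) (hα : 0 ≤ α) {T : ℝ} (hT : 0 ≤ T)
    (n : ℕ) : P {ω | n ≤ ν T ω} ≤ ENNReal.ofReal ((α * T) ^ n / n !) := by
  set c := α * T
  have hc : 0 ≤ c := mul_nonneg hα hT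
  have hsummable : Summable fun k => Real.exp (-c) * c ^ (n + k) / (n + k)! :=
    (Real.summable_pow_div_factorial c).comp_injective (add_right_injective n) |>.mul_left
      (Real.exp (-c)) |>.congr fun k => by simp [mul_div_assoc]
  have hcover : {ω | n ≤ ν T ω} ⊆ ⋃ k : ℕ, {ω | ν T ω = n + k} := fun ω h =>
    mem_iUnion.2 ⟨ν T ω - n, by simp only [mem_ofPred_eq] at h ⊢; omega⟩
  calc P {ω | n ≤ ν T ω} ≤ ∑' k : ℕ, P {ω | ν T ω = n + k} :=
        (measure_mono hcover).trans (measure_iUnion_le _)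
    _ = ENNReal.ofReal (∑' k, Real.exp (-c) * c ^ (n + k) / (n + k)!) := by
        rw [ENNReal.ofReal_tsum_of_nonneg (fun k => by positivity) hsummable]
        exact tsum_congr fun k => hν.measure_eq hT (n + k)
    _ ≤ ENNReal.ofReal (c ^ n / n !) := by
        refine ENNReal.ofReal_le_ofReal ?_
        simp_rw [mul_div_assoc]
        rw [tsum_mul_left, Real.exp_neg]
        calc (Real.exp c)⁻¹ * ∑' k, c ^ (n + k) / (n + k)!
            ≤ (Real.exp c)⁻¹ * (c ^ n / n ! * Real.exp c) := by
              gcongr; exact Real.tsum_pow_add_div_factorial_le hc n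
          _ = c ^ n / n ! := by field_simp

end IsPoissonProcess

theorem IsMarkovChainFrom.measure_le_comp_poisson_le {Ω : Type*} [MeasurableSpace Ω]
    {P : Measure Ω} {lam mu α : ℝ} {η : ℕ → Ω → ℕ} {ν : ℝ → Ω → ℕ}
    (hη : IsMarkovChainFrom P lam mu 0 η) (hν : IsPoissonProcess P α ν) (hα : 0 ≤ α)
    {T : ℝ} (hT : 0 ≤ T) (y : ℝ) :
    P {ω | y ≤ η (ν T ω) ω} ≤ ENNReal.ofReal ((α * T) ^ ⌈y⌉₊ / ⌈y⌉₊ !) := by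
  refine (measure_mono_ae ?_).trans (hν.measure_le_le hα hT ⌈y⌉₊)
  filter_upwards [hη.ae_le_add] with ω hω hy
  exact Nat.ceil_le.2 (hy.trans (by exact_mod_cast (hω _).trans_eq (zero_add _)))

theorem IsMarkovChainFrom.log_measure_le_comp_poisson {Ω : Type*} [MeasurableSpace Ω]
    {P : Measure Ω} {lam mu α : ℝ} {η : ℕ → Ω → ℕ} {ν : ℝ → Ω → ℕ}
    (hη : IsMarkovChainFrom P lam mu 0 η) (hν : IsPoissonProcess P α ν) (hα : 0 < α)
    {T y : ℝ} (hT : 0 < T) (hy : 0 < y) (hyc : 1 ≤ Real.log (y / (α * T))) :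
    ENNReal.log (P {ω | y ≤ η (ν T ω) ω}) ≤
      ((-(y * (Real.log (y / (α * T)) - 1)) : ℝ) : EReal) :=
  calc _ ≤ _ := ENNReal.log_monotone (hη.measure_le_comp_poisson_le hν hα.le hT.le y)
    _ = _ := ENNReal.log_ofReal_of_pos (by positivity)
    _ ≤ _ := EReal.coe_le_coe_iff.2
        (Real.log_pow_div_factorial_le (by positivity) hy (Nat.le_ceil y) hyc)

end

theorem sldp_upper_bound_poisson_uniform_catastrophes_general
    {Ω : Type*} [MeasurableSpace Ω] (P : Measure Ω)
    (lam mu alpha : ℝ) (halpha : 0 < alpha)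
    (η : ℕ → Ω → ℕ) (ν : ℝ → Ω → ℕ)
    (hη : IsMarkovChainFrom P lam mu 0 η)
    (hν : IsPoissonProcess P alpha ν)
    (φ : ℝ → ℝ) (hφpos : ∀ T > (0 : ℝ), 0 < φ T)
    (hφ : Tendsto (fun T => φ T / T) atTop atTop)
    (x : ℝ) (hx : 0 < x) :
    Filter.limsup
        (fun T => (((φ T * Real.log (φ T / T))⁻¹ : ℝ) : EReal) *
          ENNReal.log (P {ω | x ≤ (η (ν T ω) ω : ℝ) / φ T}))
        atTop
      ≤ ((-x : ℝ) : EReal) := by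
  set c := Real.log (x / alpha) - 1
  have hlog : Tendsto (fun T => Real.log (φ T / T)) atTop atTop :=
    Real.tendsto_log_atTop.comp hφ
  have hbound : ∀ᶠ T in atTop,
      (((φ T * Real.log (φ T / T))⁻¹ : ℝ) : EReal) *
          ENNReal.log (P {ω | x ≤ (η (ν T ω) ω : ℝ) / φ T})
        ≤ ((-x * (1 + c / Real.log (φ T / T)) : ℝ) : EReal) := by
    filter_upwards [eventually_gt_atTop 0,
      hlog.eventually_ge_atTop (max 1 (2 - Real.log (x / alpha)))] with T hT hψ_ge
    have hφT := hφpos T hT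
    have hψ : 0 < Real.log (φ T / T) := one_pos.trans_le ((le_max_left _ _).trans hψ_ge)
    have hratio :
        Real.log (x * φ T / (alpha * T)) = Real.log (x / alpha) + Real.log (φ T / T) := by
      rw [← Real.log_mul (by positivity) (by positivity)]
      congr 1
      field_simp
    have hlogP := hη.log_measure_le_comp_poisson hν halpha hT (by positivity : 0 < x * φ T)
      (by linarith [(le_max_right _ _).trans hψ_ge])
    simp_rw [← le_div_iff₀ hφT] at hlogP
    calc _ ≤ _ := mul_le_mul_of_nonneg_left hlogP (EReal.coe_nonneg.2 (by positivity))
      _ = _ := by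
          rw [← EReal.coe_mul, hratio]
          congr 1
          field_simp
          ring
  refine (limsup_le_limsup hbound).trans (le_of_eq ?_)
  have hlim : Tendsto (fun T => -x * (1 + c / Real.log (φ T / T))) atTop (𝓝 (-x)) := by
    simpa using ((tendsto_const_nhds.div_atTop hlog).const_add 1).const_mul (-x)
  exact ((continuous_coe_real_ereal.tendsto _).comp hlim).limsup_eq

/-- **Upper bound in the superlinear regime.** If `φ(T)/T → ∞`, then for every `x > 0`,
`limsup_{T→∞} (1/(φ(T) ln(φ(T)/T))) ln P(ξ(T)/φ(T) ≥ x) ≤ -x`. -/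
theorem sldp_upper_bound_poisson_uniform_catastrophes
    {Ω : Type*} [MeasurableSpace Ω] (P : Measure Ω) [IsProbabilityMeasure P]
    (lam mu alpha : ℝ) (hlam : 0 < lam) (hmu : 0 < mu) (halpha : 0 < alpha)
    (η : ℕ → Ω → ℕ) (ν : ℝ → Ω → ℕ)
    (hη : IsMarkovChainFrom P lam mu 0 η)
    (hν : IsPoissonProcess P alpha ν)
    (hind : IndepProc P η ν)
    (φ : ℝ → ℝ) (hφpos : ∀ T > (0 : ℝ), 0 < φ T)
    (hφ : Tendsto (fun T => φ T / T) atTop atTop)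
    (x : ℝ) (hx : 0 < x) :
    Filter.limsup
        (fun T => (((φ T * Real.log (φ T / T))⁻¹ : ℝ) : EReal) *
          ENNReal.log (P {ω | x ≤ (η (ν T ω) ω : ℝ) / φ T}))
        atTop
      ≤ ((-x : ℝ) : EReal) :=
  sldp_upper_bound_poisson_uniform_catastrophes_general P lam mu alpha halpha η ν hη hν φ hφpos hφ x
    hx
end
end

section
/- Let λ, μ, α > 0 and let φ satisfy φ(T)/T → ∞ as T → ∞. Then for every x > 0, liminf_{T→∞} (1/(φ(T)·ln(φ(T)/T))) ln P(ξ_T(1) ≥ x) ≥ −x. -/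
open MeasureTheory ProbabilityTheory Filter Set
open scoped ENNReal Topology

noncomputable section

/-!
For `ξ(T) ≥ n := ⌈x φ(T)⌉` it suffices that the chain climbs `0 → 1 → ⋯ → n` without a
catastrophe, which has probability at least `(λ/(λ+μ))^n`, while the clock rings exactly `n`
times by time `T`, which has probability `e^{-αT} (αT)^n / n!`. By independence these multiply,
and with `n! ≤ n^n` the logarithm of the product is at least `n log(αT/n) - O(n + T)`.
Since `T = o(φ(T))`, this is `-x φ(T) log(φ(T)/T) (1 + o(1))`.
-/

def straightClimbProb (q a : ℝ) (n : ℕ) : ℝ :=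
  q ^ n * (Real.exp (-a) * a ^ n / n.factorial)

lemma straightClimbProb_pos {q a : ℝ} (hq : 0 < q) (ha : 0 < a) (n : ℕ) :
    0 < straightClimbProb q a n := by
  unfold straightClimbProb
  positivity

lemma div_add_le_transP_succ {lam mu : ℝ} (hlam : 0 ≤ lam) (hmu : 0 ≤ mu) (l : ℕ) :
    lam / (lam + mu) ≤ transP lam mu l (l + 1) := by
  rcases eq_or_ne l 0 with rfl | hl
  · simpa [transP] using div_le_one_of_le₀ (le_add_of_nonneg_right hmu) (add_nonneg hlam hmu)
  · simp [transP, hl]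

section Events

variable {Ω : Type*} [MeasurableSpace Ω] {P : Measure Ω}

lemma IsMarkovChainFrom.ofReal_pow_le_measure_climb {lam mu : ℝ} {η : ℕ → Ω → ℕ}
    (hη : IsMarkovChainFrom P lam mu 0 η) (hlam : 0 ≤ lam) (hmu : 0 ≤ mu) (n : ℕ) :
    ENNReal.ofReal ((lam / (lam + mu)) ^ n) ≤ P {ω | ∀ l ≤ n, η l ω = l} := by
  rw [hη.2 n fun l => l, if_pos rfl, one_mul,
    ENNReal.ofReal_pow (div_nonneg hlam (add_nonneg hlam hmu))]
  simpa only [Finset.card_range] using Finset.pow_card_le_prod (Finset.range n) _ _ fun l _ =>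
    ENNReal.ofReal_le_ofReal (div_add_le_transP_succ hlam hmu l)

lemma IsPoissonProcess.measure_eq_s7 {α : ℝ} {ν : ℝ → Ω → ℕ} (hν : IsPoissonProcess P α ν)
    {T : ℝ} (hT : 0 ≤ T) (k : ℕ) :
    P {ω | ν T ω = k} = ENNReal.ofReal (Real.exp (-(α * T)) * (α * T) ^ k / k.factorial) := by
  simpa [hν.2.1] using hν.2.2.2.2 0 T le_rfl hT k

lemma ofReal_straightClimbProb_le_measure {lam mu alpha : ℝ} {η : ℕ → Ω → ℕ} {ν : ℝ → Ω → ℕ}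
    (hη : IsMarkovChainFrom P lam mu 0 η) (hν : IsPoissonProcess P alpha ν)
    (hind : IndepProc P η ν) (hlam : 0 ≤ lam) (hmu : 0 ≤ mu) {T : ℝ} (hT : 0 ≤ T) (n : ℕ) :
    ENNReal.ofReal (straightClimbProb (lam / (lam + mu)) (alpha * T) n) ≤
      P {ω | n ≤ η (ν T ω) ω} := by
  have hclimb : MeasurableSet {f : ℕ → ℕ | ∀ l ≤ n, f l = l} := by
    simp only [ofPred_forall]
    exact .biInter (to_countable _) fun l _ =>
      measurableSet_eq_fun (measurable_pi_apply l) measurable_const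
  have hclock : MeasurableSet {g : ℝ → ℕ | g T = n} :=
    measurableSet_eq_fun (measurable_pi_apply T) measurable_const
  calc ENNReal.ofReal (straightClimbProb (lam / (lam + mu)) (alpha * T) n)
      = ENNReal.ofReal ((lam / (lam + mu)) ^ n) * P {ω | ν T ω = n} := by
        rw [straightClimbProb, ENNReal.ofReal_mul
          (pow_nonneg (div_nonneg hlam (add_nonneg hlam hmu)) n), hν.measure_eq_s7 hT]
    _ ≤ P {ω | ∀ l ≤ n, η l ω = l} * P {ω | ν T ω = n} := by
        gcongr
        exact hη.ofReal_pow_le_measure_climb hlam hmu n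
    _ = P ({ω | ∀ l ≤ n, η l ω = l} ∩ {ω | ν T ω = n}) :=
        (hind.measure_inter_preimage_eq_mul _ _ hclimb hclock).symm
    _ ≤ P {ω | n ≤ η (ν T ω) ω} :=
        measure_mono fun ω ⟨hclimbω, hclockω⟩ =>
          ((congrArg (η · ω) hclockω).trans (hclimbω n le_rfl)).ge

end Events

lemma log_straightClimbProb_ge {q a : ℝ} (hq : 0 < q) (ha : 0 < a) (n : ℕ) :
    n * Real.log q - a + n * Real.log a - n * Real.log n ≤
      Real.log (straightClimbProb q a n) := by
  have hfac : Real.log (n.factorial : ℝ) ≤ n * Real.log n := by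
    rw [← Real.log_pow]
    exact Real.log_le_log (by positivity) (by exact_mod_cast Nat.factorial_le_pow n)
  rw [straightClimbProb, Real.log_mul (by positivity) (by positivity),
    Real.log_div (by positivity) (by positivity), Real.log_mul (by positivity) (by positivity),
    Real.log_exp, Real.log_pow, Real.log_pow]
  linarith

lemma tendsto_climb_exponent {φ : ℝ → ℝ} (hφ : Tendsto (fun T => φ T / T) atTop atTop)
    {q a x : ℝ} (ha : 0 < a) (hx : 0 < x) :
    Tendsto (fun T => (φ T * Real.log (φ T / T))⁻¹ *
      (⌈x * φ T⌉₊ * Real.log q - a * T + ⌈x * φ T⌉₊ * Real.log (a * T)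
        - ⌈x * φ T⌉₊ * Real.log ⌈x * φ T⌉₊)) atTop (𝓝 (-x)) := by
  have hφ_top : Tendsto φ atTop atTop := by
    refine (hφ.atTop_mul_atTop₀ tendsto_id).congr' ?_
    filter_upwards [eventually_ne_atTop 0] with T hT
    exact div_mul_cancel₀ (φ T) hT
  set u : ℝ → ℝ := fun T => ⌈x * φ T⌉₊ / φ T
  set L : ℝ → ℝ := fun T => Real.log (φ T / T)
  have hu : Tendsto u atTop (𝓝 x) := (tendsto_nat_ceil_mul_div_atTop hx.le).comp hφ_top
  have hL : Tendsto L atTop atTop := Real.tendsto_log_atTop.comp hφ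
  have hTφ : Tendsto (fun T => T / φ T) atTop (𝓝 0) :=
    hφ.inv_tendsto_atTop.congr fun T => inv_div (φ T) T
  have hlim : Tendsto (fun T => u T * ((Real.log q + Real.log a - Real.log (u T)) / L T - 1)
      - a * (T / φ T) / L T) atTop (𝓝 (x * (0 - 1) - a * 0 * 0)) := by
    have hlog_u : Tendsto (fun T => Real.log q + Real.log a - Real.log (u T)) atTop
        (𝓝 (Real.log q + Real.log a - Real.log x)) :=
      tendsto_const_nhds.sub ((Real.continuousAt_log hx.ne').tendsto.comp hu)
    exact (hu.mul ((hlog_u.div_atTop hL).sub_const 1)).sub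
      ((tendsto_const_nhds.mul hTφ).mul hL.inv_tendsto_atTop)
  rw [show x * (0 - 1) - a * 0 * 0 = -x by ring] at hlim
  refine hlim.congr' ?_
  filter_upwards [eventually_gt_atTop 0, hφ.eventually_gt_atTop 1] with T hT hφT
  have hf : 0 < φ T := by linarith [(one_lt_div hT).1 hφT]
  have hN : (0 : ℝ) < ⌈x * φ T⌉₊ := by exact_mod_cast Nat.ceil_pos.2 (mul_pos hx hf)
  have hLT : L T ≠ 0 := (Real.log_pos hφT).ne'
  simp only [u, L] at hLT ⊢
  rw [Real.log_div hN.ne' hf.ne', Real.log_mul ha.ne' hT.ne']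
  rw [Real.log_div hf.ne' hT.ne'] at hLT ⊢
  field_simp
  ring

theorem sldp_lower_bound_poisson_uniform_catastrophes_general
    {Ω : Type*} [MeasurableSpace Ω] (P : Measure Ω)
    (lam mu alpha : ℝ) (hlam : 0 < lam) (hmu : 0 < mu) (halpha : 0 < alpha)
    (η : ℕ → Ω → ℕ) (ν : ℝ → Ω → ℕ)
    (hη : IsMarkovChainFrom P lam mu 0 η)
    (hν : IsPoissonProcess P alpha ν)
    (hind : IndepProc P η ν)
    (φ : ℝ → ℝ)
    (hφ : Tendsto (fun T => φ T / T) atTop atTop)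
    (x : ℝ) (hx : 0 < x) :
    ((-x : ℝ) : EReal) ≤
      Filter.liminf
        (fun T => (((φ T * Real.log (φ T / T))⁻¹ : ℝ) : EReal) *
          ENNReal.log (P {ω | x ≤ (η (ν T ω) ω : ℝ) / φ T}))
        atTop := by
  have hq : 0 < lam / (lam + mu) := div_pos hlam (add_pos hlam hmu)
  refine (EReal.tendsto_coe.2 (tendsto_climb_exponent (q := lam / (lam + mu)) hφ halpha hx)).liminf_eq.symm.le.trans
    (liminf_le_liminf ?_)
  filter_upwards [eventually_gt_atTop 0, hφ.eventually_gt_atTop 1] with T hT hφT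
  have hf : 0 < φ T := by linarith [(one_lt_div hT).1 hφT]
  have hevent : {ω | ⌈x * φ T⌉₊ ≤ η (ν T ω) ω} ⊆ {ω | x ≤ (η (ν T ω) ω : ℝ) / φ T} :=
    fun ω hω => (le_div_iff₀ hf).2 (Nat.ceil_le.1 hω)
  have hlog : (Real.log (straightClimbProb (lam / (lam + mu)) (alpha * T) ⌈x * φ T⌉₊) : EReal)
      ≤ ENNReal.log (P {ω | x ≤ (η (ν T ω) ω : ℝ) / φ T}) := by
    rw [← ENNReal.log_ofReal_of_pos (straightClimbProb_pos hq (mul_pos halpha hT) _)]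
    exact ENNReal.log_le_log ((ofReal_straightClimbProb_le_measure hη hν hind hlam.le hmu.le
      hT.le _).trans (measure_mono hevent))
  have hcoef : (0 : EReal) ≤ ((φ T * Real.log (φ T / T))⁻¹ : ℝ) :=
    EReal.coe_nonneg.2 (inv_nonneg.2 (mul_pos hf (Real.log_pos hφT)).le)
  rw [EReal.coe_mul]
  refine mul_le_mul_of_nonneg_left (le_trans ?_ hlog) hcoef
  exact EReal.coe_le_coe_iff.2 (log_straightClimbProb_ge hq (mul_pos halpha hT) _)

/-- **Lower bound in the superlinear regime.** If `φ(T)/T → ∞`, then for every `x > 0`,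
`liminf_{T→∞} (1/(φ(T) ln(φ(T)/T))) ln P(ξ(T)/φ(T) ≥ x) ≥ -x`. -/
theorem sldp_lower_bound_poisson_uniform_catastrophes
    {Ω : Type*} [MeasurableSpace Ω] (P : Measure Ω) [IsProbabilityMeasure P]
    (lam mu alpha : ℝ) (hlam : 0 < lam) (hmu : 0 < mu) (halpha : 0 < alpha)
    (η : ℕ → Ω → ℕ) (ν : ℝ → Ω → ℕ)
    (hη : IsMarkovChainFrom P lam mu 0 η)
    (hν : IsPoissonProcess P alpha ν)
    (hind : IndepProc P η ν)
    (φ : ℝ → ℝ) (hφpos : ∀ T > (0 : ℝ), 0 < φ T)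
    (hφ : Tendsto (fun T => φ T / T) atTop atTop)
    (x : ℝ) (hx : 0 < x) :
    ((-x : ℝ) : EReal) ≤
      Filter.liminf
        (fun T => (((φ T * Real.log (φ T / T))⁻¹ : ℝ) : EReal) *
          ENNReal.log (P {ω | x ≤ (η (ν T ω) ω : ℝ) / φ T}))
        atTop :=
  sldp_lower_bound_poisson_uniform_catastrophes_general P lam mu alpha hlam hmu halpha η ν hη hν
    hind φ hφ x hx
end
end
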